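/- Let C be a Z-type complex over 𝔽₂ and V a separated logical operator subcomplex of C determined by u (with chain map f : V → C, V₀ = 𝔽₂^m, V₋₁ = 𝔽₂^r, ∂^V surjective), let W be the sandwich complex built from ∂^V with left inclusion ℓ : V → W, and let R be the pushout of f : V → C and ℓ : V → W, i.e. R_i = (C_i ⊕ W_i)/⟨(f_i s, ℓ_i s) : s ∈ V_i⟩ degreewise (V₁ = 0). Then the cosystolic distance satisfies d^X(R) ≥ d^X(C). -/
import Mathlib


/-!
STATEMENT 15: Let R be the pushout gluing the Z-type complex C to the
sandwich complex W along the separated logical operator subcomplex V of C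
determined by u.  Then the cosystolic distance satisfies d^X(R) ≥ d^X(C):
every X-logical of R dominates in Hamming weight some X-logical of C.
-/

abbrev F2 := ZMod 2

/-- Coordinate inclusion of 𝔽₂^α into 𝔽₂^β along an embedding ι : α ↪ β. -/
noncomputable def incl {α β : Type} [Fintype α] [DecidableEq β] (ι : α ↪ β) :
    (α → F2) →ₗ[F2] (β → F2) :=
  Matrix.mulVecLin (Matrix.of fun j i => if j = ι i then 1 else 0)

/-- Hamming weight of a vector in 𝔽₂^α. -/
def wtv {α : Type} [Fintype α] (y : α → F2) : ℕ :=
  (Finset.univ.filter fun j => y j ≠ 0).card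

/-- Standard 𝔽₂ dot product. -/
def dotP {α : Type} [Fintype α] (x y : α → F2) : F2 := ∑ j, x j * y j

/-- Dot product on a triple product of 𝔽₂ function spaces. -/
def dot3 {α β γ : Type} [Fintype α] [Fintype β] [Fintype γ]
    (p q : (α → F2) × ((β → F2) × (γ → F2))) : F2 :=
  dotP p.1 q.1 + dotP p.2.1 q.2.1 + dotP p.2.2 q.2.2

/-- Hamming weight on a triple product of 𝔽₂ function spaces. -/
def wt3 {α β γ : Type} [Fintype α] [Fintype β] [Fintype γ]
    (p : (α → F2) × ((β → F2) × (γ → F2))) : ℕ :=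
  wtv p.1 + wtv p.2.1 + wtv p.2.2

/-- Degree-0 differential of the sandwich complex W: x ↦ (x, x, ∂^V x). -/
noncomputable def sandD0 {T0 Tm : Type} (dV : (T0 → F2) →ₗ[F2] (Tm → F2)) :
    (T0 → F2) →ₗ[F2] ((T0 → F2) × ((T0 → F2) × (Tm → F2))) :=
  LinearMap.id.prod (LinearMap.id.prod dV)

/-- Degree-(-1) differential of the sandwich complex W:
(a, b, c) ↦ (∂^V a + c, ∂^V b + c). -/
noncomputable def sandDm {T0 Tm : Type} (dV : (T0 → F2) →ₗ[F2] (Tm → F2)) :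
    ((T0 → F2) × ((T0 → F2) × (Tm → F2))) →ₗ[F2] ((Tm → F2) × (Tm → F2)) :=
  ((dV ∘ₗ LinearMap.fst F2 (T0 → F2) ((T0 → F2) × (Tm → F2))) +
      ((LinearMap.snd F2 (T0 → F2) (Tm → F2)) ∘ₗ
        (LinearMap.snd F2 (T0 → F2) ((T0 → F2) × (Tm → F2))))).prod
    ((dV ∘ₗ ((LinearMap.fst F2 (T0 → F2) (Tm → F2)) ∘ₗ
        (LinearMap.snd F2 (T0 → F2) ((T0 → F2) × (Tm → F2))))) +
      ((LinearMap.snd F2 (T0 → F2) (Tm → F2)) ∘ₗ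
        (LinearMap.snd F2 (T0 → F2) ((T0 → F2) × (Tm → F2)))))

/-- The coequalizer map (C₀ ⊕ W₀) → R₀ on the glued index set SC0 ⊕ T0 ⊕ Tm:
(x, (a, b, c)) ↦ (x + f₀ a, b, c). -/
noncomputable def glueCoeq0 {SC0 T0 Tm : Type}
    [Fintype SC0] [Fintype T0] [Fintype Tm] [DecidableEq SC0]
    (ιC : T0 ↪ SC0) :
    ((SC0 → F2) × ((T0 → F2) × ((T0 → F2) × (Tm → F2)))) →ₗ[F2]
      ((SC0 → F2) × ((T0 → F2) × (Tm → F2))) :=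
  ((LinearMap.fst F2 (SC0 → F2) ((T0 → F2) × ((T0 → F2) × (Tm → F2)))) +
      (incl ιC ∘ₗ
        (LinearMap.fst F2 (T0 → F2) ((T0 → F2) × (Tm → F2))) ∘ₗ
        (LinearMap.snd F2 (SC0 → F2) ((T0 → F2) × ((T0 → F2) × (Tm → F2)))))).prod
    ((LinearMap.snd F2 (T0 → F2) ((T0 → F2) × (Tm → F2))) ∘ₗ
      (LinearMap.snd F2 (SC0 → F2) ((T0 → F2) × ((T0 → F2) × (Tm → F2)))))

/-- The coequalizer map (C₋₁ ⊕ W₋₁) → R₋₁ on the glued index set SCm ⊕ Tm: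
(x, (t₁, t₂)) ↦ (x + f₋₁ t₁, t₂). -/
noncomputable def glueCoeqm {SCm Tm : Type}
    (fm : (Tm → F2) →ₗ[F2] (SCm → F2)) :
    ((SCm → F2) × ((Tm → F2) × (Tm → F2))) →ₗ[F2] ((SCm → F2) × (Tm → F2)) :=
  ((LinearMap.fst F2 (SCm → F2) ((Tm → F2) × (Tm → F2))) +
      (fm ∘ₗ (LinearMap.fst F2 (Tm → F2) (Tm → F2)) ∘ₗ
        (LinearMap.snd F2 (SCm → F2) ((Tm → F2) × (Tm → F2))))).prod
    ((LinearMap.snd F2 (Tm → F2) (Tm → F2)) ∘ₗ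
      (LinearMap.snd F2 (SCm → F2) ((Tm → F2) × (Tm → F2))))

/-- The dot product with a fixed vector, as a linear functional. -/
noncomputable def dotL {α : Type} [Fintype α] (y : α → F2) : (α → F2) →ₗ[F2] F2 where
  toFun x := dotP x y
  map_add' a b := by simp [dotP, add_mul, Finset.sum_add_distrib]
  map_smul' c a := by simp [dotP, Finset.mul_sum, mul_assoc]

theorem glued_sandwich_cosystolic_distance
    {SC1 SC0 SCm T0 Tm : Type}
    [Fintype SC1] [Fintype SC0] [Fintype SCm] [Fintype T0] [Fintype Tm]
    [DecidableEq SC0] [DecidableEq T0]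
    (dC0 : (SC1 → F2) →ₗ[F2] (SC0 → F2)) (dCm : (SC0 → F2) →ₗ[F2] (SCm → F2))
    (hC : dCm ∘ₗ dC0 = 0)
    (ιC : T0 ↪ SC0)
    (hu : incl ιC 1 ∈ LinearMap.ker dCm) (hu' : incl ιC 1 ∉ LinearMap.range dC0)
    -- V₋₁ = 𝔽₂^Tm with injective inclusion fm and surjective corestriction dV
    (fm : (Tm → F2) →ₗ[F2] (SCm → F2)) (hfm : Function.Injective fm)
    (dV : (T0 → F2) →ₗ[F2] (Tm → F2)) (hdV : Function.Surjective dV)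
    (hfC : dCm ∘ₗ incl ιC = fm ∘ₗ dV)
    -- V is separated in C
    (hsepC : ∀ u' : SC0 → F2, u' ∈ LinearMap.ker dCm → u' ∉ LinearMap.range dC0 →
      (∀ j, u' j ≠ 0 → incl ιC 1 j ≠ 0) → u' + incl ιC 1 ∈ LinearMap.range dC0)
    -- the induced differential ∂₋₁^R on the concretely realized R
    (dRm : ((SC0 → F2) × ((T0 → F2) × (Tm → F2))) →ₗ[F2]
      ((SCm → F2) × (Tm → F2)))
    (hdRm : dRm ∘ₗ glueCoeq0 ιC = glueCoeqm fm ∘ₗ (dCm.prodMap (sandDm dV))) :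
    -- d^X(R) ≥ d^X(C)
    ∀ ξ : (SC0 → F2) × ((T0 → F2) × (Tm → F2)),
      -- ξ is an X-cocycle of R ...
      (∀ x : (SC1 → F2) × (T0 → F2),
        dot3 (glueCoeq0 ιC ((dC0.prodMap (sandD0 dV)) x)) ξ = 0) →
      -- ... which is not an X-coboundary of R
      (¬ ∃ ψ : ((SCm → F2) × (Tm → F2)) →ₗ[F2] F2,
        ∀ z : (SC0 → F2) × ((T0 → F2) × (Tm → F2)), dot3 z ξ = ψ (dRm z)) →
      -- ... dominates in weight some X-logical of C
      ∃ z : SC0 → F2,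
        ((∀ x : SC1 → F2, dotP (dC0 x) z = 0) ∧
          ¬ ∃ ψ : (SCm → F2) →ₗ[F2] F2, ∀ w : SC0 → F2, dotP w z = ψ (dCm w)) ∧
        wtv z ≤ wt3 ξ := by
  intro ξ hcoc hncob
  -- the cocycle condition, specialized
  have hA : ∀ x1 : SC1 → F2, dotP (dC0 x1) ξ.1 = 0 := by
    intro x1
    have h := hcoc (x1, 0)
    simpa [dot3, glueCoeq0, sandD0, dotP, LinearMap.prodMap_apply] using h
  have hB : ∀ s : T0 → F2,
      dotP (incl ιC s) ξ.1 + dotP s ξ.2.1 + dotP (dV s) ξ.2.2 = 0 := by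
    intro s
    have h := hcoc (0, s)
    have hz : dC0 (0 : SC1 → F2) = 0 := map_zero _
    simpa [dot3, glueCoeq0, sandD0, dotP, LinearMap.prodMap_apply, hz,
      add_assoc] using h
  refine ⟨ξ.1, ⟨?_, ?_⟩, ?_⟩
  · exact hA
  · rintro ⟨ψC, hψ⟩
    apply hncob
    -- explicit formula for dRm
    have hdRmz : ∀ x : SC0 → F2, ∀ b : T0 → F2, ∀ c : Tm → F2,
        dRm (x, (b, c)) = (dCm x + fm c, dV b + c) := by
      intro x b c
      have h := LinearMap.congr_fun hdRm (x, ((0 : T0 → F2), (b, c)))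
      simpa [glueCoeq0, glueCoeqm, sandDm, LinearMap.prodMap_apply] using h
    refine ⟨(ψC ∘ₗ LinearMap.fst F2 (SCm → F2) (Tm → F2)) +
      ((dotL ξ.2.2 + ψC ∘ₗ fm) ∘ₗ LinearMap.snd F2 (SCm → F2) (Tm → F2)), ?_⟩
    rintro ⟨x, b, c⟩
    rw [hdRmz x b c]
    have h1 : dotP x ξ.1 = ψC (dCm x) := hψ x
    have h2 : dotP (incl ιC b) ξ.1 = ψC (fm (dV b)) := by
      have h3 := LinearMap.congr_fun hfC b
      simp only [LinearMap.comp_apply] at h3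
      have := hψ (incl ιC b)
      rwa [h3] at this
    have hBb := hB b
    simp only [dot3, LinearMap.add_apply, LinearMap.comp_apply,
      LinearMap.fst_apply, LinearMap.snd_apply, map_add, dotL,
      LinearMap.coe_mk, AddHom.coe_mk]
    -- everything is now an equation in F2
    have htwo : (2 : F2) = 0 := by decide
    linear_combination h1 + h2 + hBb -
      (ψC (fm c) + dotP (dV b) ξ.2.2 + dotP (incl ιC b) ξ.1) * htwo
  · have : wt3 ξ = wtv ξ.1 + wtv ξ.2.1 + wtv ξ.2.2 := by simp [wt3, add_assoc]
    omega
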